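/- arXiv:1606.08804 — 2 statements merged into one kernel-verified Lean document; each statement's English description precedes it below -/
import Mathlib

section
/- Let φ = (1+√5)/2 be the golden ratio. For every real number x > 0 satisfying (2x+1)/(x²+x) ≤ 1, one has (2x+1)/2 ≥ φ³/2, with equality if and only if x = φ. -/
/-- Let `φ = (1+√5)/2`. For every `x > 0` with `(2x+1)/(x²+x) ≤ 1`, one has
`(2x+1)/2 ≥ φ³/2`, with equality iff `x = φ`. -/
theorem area_ge_golden_cubed_half (φ : ℝ) (hφ : φ = (1 + Real.sqrt 5) / 2)
    (x : ℝ) (hx : 0 < x) (hsin : (2 * x + 1) / (x ^ 2 + x) ≤ 1) :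
    (2 * x + 1) / 2 ≥ φ ^ 3 / 2 ∧ ((2 * x + 1) / 2 = φ ^ 3 / 2 ↔ x = φ) := by
  have hs : Real.sqrt 5 ^ 2 = 5 := Real.sq_sqrt (by norm_num)
  have hs2 : (2 : ℝ) ≤ Real.sqrt 5 := by
    nlinarith [Real.sqrt_nonneg 5]
  have hpos : 0 < x ^ 2 + x := by positivity
  have hle : 2 * x + 1 ≤ x ^ 2 + x := by
    have := (div_le_one hpos).mp hsin
    linarith
  have hxφ : φ ≤ x := by
    by_contra h
    push_neg at h
    nlinarith [Real.sqrt_nonneg 5]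
  have hcube : φ ^ 3 = 2 * φ + 1 := by
    subst hφ; nlinarith [Real.sqrt_nonneg 5]
  constructor
  · rw [hcube]; linarith
  · constructor
    · intro h; rw [hcube] at h; linarith
    · intro h; rw [h, hcube]
end

section
/- Let φ = (1+√5)/2 be the golden ratio. The minimum of the area S(x) = (2x+1)/2 over all x > 0 for which (2x+1)/(x²+x) ≤ 1 equals φ³/2, and it is attained exactly at x = φ, where moreover (2φ+1)/(φ²+φ) = 1. (This is Proposition 1: the triangle of smallest area circumscribing a semicircle of radius 1, subject to R, AB, AC not being the edges of a triangle, is a right triangle similar to the (1, φ, √(1+φ²)) triangle.) -/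
/-- Proposition 1: the minimum of the area `S(x) = (2x+1)/2` over all `x > 0` with
`(2x+1)/(x²+x) ≤ 1` equals `φ³/2`, attained exactly at `x = φ`, where moreover
`(2φ+1)/(φ²+φ) = 1`. -/
theorem smallest_area_circumscribing_triangle (φ : ℝ)
    (hφ : φ = (1 + Real.sqrt 5) / 2) :
    IsLeast {S : ℝ | ∃ x : ℝ, 0 < x ∧ (2 * x + 1) / (x ^ 2 + x) ≤ 1 ∧
        S = (2 * x + 1) / 2} (φ ^ 3 / 2) ∧
    (∀ x : ℝ, 0 < x → (2 * x + 1) / (x ^ 2 + x) ≤ 1 →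
        ((2 * x + 1) / 2 = φ ^ 3 / 2 ↔ x = φ)) ∧
    (2 * φ + 1) / (φ ^ 2 + φ) = 1 := by
  have h5 : Real.sqrt 5 ^ 2 = 5 := Real.sq_sqrt (by norm_num)
  have h5' : (2:ℝ) < Real.sqrt 5 := by nlinarith [Real.sqrt_nonneg 5]
  have hφ2 : φ ^ 2 = φ + 1 := by rw [hφ]; nlinarith
  have hφpos : 0 < φ := by rw [hφ]; linarith
  have hφ3 : φ ^ 3 = 2 * φ + 1 := by nlinarith [hφ2]
  -- key: constraint implies x ≥ φ
  have key : ∀ x : ℝ, 0 < x → (2 * x + 1) / (x ^ 2 + x) ≤ 1 → φ ≤ x := by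
    intro x hx hc
    have hd : 0 < x ^ 2 + x := by positivity
    have h1 : 2 * x + 1 ≤ x ^ 2 + x := by
      have := (div_le_one hd).mp hc
      linarith
    nlinarith [sq_nonneg (x - φ), sq_nonneg (x + φ)]
  have hφc : (2 * φ + 1) / (φ ^ 2 + φ) = 1 := by
    have : φ ^ 2 + φ = 2 * φ + 1 := by linarith [hφ2]
    rw [this]
    exact div_self (by positivity)
  refine ⟨⟨⟨φ, hφpos, le_of_eq hφc, by rw [hφ3]⟩, ?_⟩, ?_, hφc⟩
  · rintro S ⟨x, hx, hc, rfl⟩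
    have := key x hx hc
    rw [hφ3]; linarith
  · intro x hx hc
    constructor
    · intro h
      have := key x hx hc
      rw [hφ3] at h; linarith
    · rintro rfl; rw [hφ3]
end
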